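/- (Characterization of order-one terms.) Let (u₁,…,u_p) be a solution of the escape-region equations and let 1 ≤ j < p. Then ord(u_j) = μ (i.e. u_j = β·X^μ + higher order terms with β ≠ 0) if and only if σ_j = 0 and σ_{j+1} ≠ σ₁. In that case the leading coefficient β of u_j satisfies β² = σ₁ − σ_{j+1}; thus β = ±1 when σ₁ − σ_{j+1} = +1, and β = ±i when σ₁ − σ_{j+1} = −1. -/

import Mathlib

/-- `f` has leading term (leading monomial) `β·X^q`: the coefficient of `X^q` is `β ≠ 0`
and all lower coefficients vanish. -/
def HasLeadingTerm (f : PowerSeries ℂ) (β : ℂ) (q : ℕ) : Prop :=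
  β ≠ 0 ∧ PowerSeries.coeff q f = β ∧ ∀ n < q, PowerSeries.coeff n f = 0

/-- `(u 1, …, u p)` is a solution of the escape-region equations of period `p`
(where `X` plays the role of `𝔱^{1/μ}`, i.e. of `ξ^{1/μ}` with `ξ = 1/(3a)`):
`u p = 0` and `X^{2μ}(u_{j+1} − u₁) = u_j²(u_j − 1)` for `1 ≤ j < p`. -/
def IsEscapeSolution (p μ : ℕ) (u : ℕ → PowerSeries ℂ) : Prop :=
  u p = 0 ∧ ∀ j, 1 ≤ j → j < p →
    (PowerSeries.X : PowerSeries ℂ) ^ (2 * μ) * (u (j + 1) - u 1)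
      = (u j) ^ 2 * (u j - 1)

/-- The error `E_j(w) = X^{2μ}(w_{j+1} − w₁) − w_j²(w_j − 1)`. -/
noncomputable def Err (μ : ℕ) (w : ℕ → PowerSeries ℂ) (j : ℕ) : PowerSeries ℂ :=
  (PowerSeries.X : PowerSeries ℂ) ^ (2 * μ) * (w (j + 1) - w 1) - (w j) ^ 2 * (w j - 1)

/-!
If `u_j = X^μ v` with `v(0) = β`, cancelling `X^{2μ}` in the escape equation leaves
`u_{j+1} − u₁ = v² (u_j − 1)`, whose constant term reads `σ_{j+1} − σ₁ = −β²`, since `σ_j = 0`.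
Conversely, if `σ_j = 0` and `σ_{j+1} ≠ σ₁` then `u_{j+1} − u₁` and `u_j − 1` have order `0`,
so comparing orders on both sides gives `2 ord(u_j) = 2μ`.
-/

open PowerSeries

section

variable {R : Type*} [CommRing R]

theorem constantCoeff_eq_of_X_pow_mul_eq {g v h : R⟦X⟧} {n : ℕ}
    (heq : X ^ (2 * n) * g = (X ^ n * v) ^ 2 * h) :
    constantCoeff g = constantCoeff v ^ 2 * constantCoeff h := by
  have hg : g = v ^ 2 * h := X_pow_mul_cancel (k := 2 * n) (by rw [heq]; ring)
  simp [hg]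

theorem order_eq_of_X_pow_mul_eq [IsDomain R] {g f h : R⟦X⟧} {n : ℕ}
    (heq : X ^ (2 * n) * g = f ^ 2 * h)
    (hg : constantCoeff g ≠ 0) (hh : constantCoeff h ≠ 0) : f.order = n := by
  have order_eq_zero {φ : R⟦X⟧} (hφ : constantCoeff φ ≠ 0) : φ.order = 0 :=
    not_not.1 (mt order_ne_zero_iff_constCoeff_eq_zero.1 hφ)
  have horder := congrArg order heq
  rw [order_mul, order_mul, order_X_pow, order_pow, order_eq_zero hg, order_eq_zero hh,
    add_zero, add_zero, two_nsmul] at horder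
  have hfin : f.order ≠ ⊤ := fun htop =>
    ENat.natCast_ne_top (2 * n) (by simpa [htop] using horder)
  lift f.order to ℕ using hfin with m
  norm_cast at horder ⊢
  omega

end

theorem exists_hasLeadingTerm_iff_order_eq {f : ℂ⟦X⟧} {q : ℕ} :
    (∃ β, HasLeadingTerm f β q) ↔ f.order = q := by
  rw [order_eq_nat]
  constructor
  · rintro ⟨β, hβ, rfl, hlow⟩
    exact ⟨hβ, hlow⟩
  · rintro ⟨hc, hlow⟩
    exact ⟨_, hc, rfl, hlow⟩

namespace HasLeadingTerm

variable {f : ℂ⟦X⟧} {β : ℂ} {q : ℕ}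

theorem constantCoeff_eq_zero (h : HasLeadingTerm f β q) (hq : 1 ≤ q) : constantCoeff f = 0 := by
  simpa using h.2.2 0 hq

theorem exists_eq_X_pow_mul (h : HasLeadingTerm f β q) :
    ∃ v, f = X ^ q * v ∧ constantCoeff v = β := by
  obtain ⟨v, rfl⟩ := X_pow_dvd_iff.2 h.2.2
  refine ⟨v, rfl, ?_⟩
  simpa [coeff_X_pow_mul'] using h.2.1

end HasLeadingTerm

theorem sq_eq_sub_of_escape_eq {μ : ℕ} (hμ : 1 ≤ μ) {a b f : ℂ⟦X⟧} {β : ℂ}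
    (heq : X ^ (2 * μ) * (b - a) = f ^ 2 * (f - 1)) (hβ : HasLeadingTerm f β μ) :
    β ^ 2 = constantCoeff a - constantCoeff b := by
  obtain ⟨v, rfl, hv⟩ := hβ.exists_eq_X_pow_mul
  have hf := hβ.constantCoeff_eq_zero hμ
  have hconst := constantCoeff_eq_of_X_pow_mul_eq heq
  simp only [map_sub, map_one, hv, hf] at hconst
  linear_combination hconst

theorem order_one_characterization_general (p μ : ℕ) (hμ : 1 ≤ μ)
    (u : ℕ → PowerSeries ℂ) (hu : IsEscapeSolution p μ u)
    (j : ℕ) (hj1 : 1 ≤ j) (hjp : j < p) :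
    ((∃ β : ℂ, HasLeadingTerm (u j) β μ) ↔
      (PowerSeries.constantCoeff (u j) = 0 ∧
        PowerSeries.constantCoeff (u (j + 1)) ≠ PowerSeries.constantCoeff (u 1))) ∧
    (∀ β : ℂ, HasLeadingTerm (u j) β μ →
      β ^ 2 = PowerSeries.constantCoeff (u 1) - PowerSeries.constantCoeff (u (j + 1)) ∧
      (PowerSeries.constantCoeff (u 1) - PowerSeries.constantCoeff (u (j + 1)) = 1 →
        β = 1 ∨ β = -1) ∧
      (PowerSeries.constantCoeff (u 1) - PowerSeries.constantCoeff (u (j + 1)) = -1 →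
        β = Complex.I ∨ β = -Complex.I)) := by
  have heq := hu.2 j hj1 hjp
  have hsq β (hβ : HasLeadingTerm (u j) β μ) := sq_eq_sub_of_escape_eq hμ heq hβ
  refine ⟨⟨?_, ?_⟩, fun β hβ => ⟨hsq β hβ, fun h => ?_, fun h => ?_⟩⟩
  · rintro ⟨β, hβ⟩
    refine ⟨hβ.constantCoeff_eq_zero hμ, fun h => hβ.1 ?_⟩
    simpa [h] using hsq β hβ
  · rintro ⟨h0, hne⟩
    rw [exists_hasLeadingTerm_iff_order_eq]
    exact order_eq_of_X_pow_mul_eq heq (by rwa [map_sub, sub_ne_zero]) (by simp [h0])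
  · exact sq_eq_one_iff.1 ((hsq β hβ).trans h)
  · exact sq_eq_sq_iff_eq_or_eq_neg.1 ((hsq β hβ).trans (h.trans Complex.I_sq.symm))

/-- **Characterization of order-one terms.** For a solution `u` of the escape-region
equations and `1 ≤ j < p`, writing `σ_k` for the constant term of `u_k`:
`ord(u_j) = μ` (i.e. `u_j = β·X^μ + …` with `β ≠ 0`) iff `σ_j = 0` and
`σ_{j+1} ≠ σ₁`; and in that case the leading coefficient `β` satisfies
`β² = σ₁ − σ_{j+1}`, so `β = ±1` when `σ₁ − σ_{j+1} = 1` and `β = ±i` when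
`σ₁ − σ_{j+1} = −1`. -/
theorem order_one_characterization (p μ : ℕ) (hp : 1 ≤ p) (hμ : 1 ≤ μ)
    (u : ℕ → PowerSeries ℂ) (hu : IsEscapeSolution p μ u)
    (j : ℕ) (hj1 : 1 ≤ j) (hjp : j < p) :
    ((∃ β : ℂ, HasLeadingTerm (u j) β μ) ↔
      (PowerSeries.constantCoeff (u j) = 0 ∧
        PowerSeries.constantCoeff (u (j + 1)) ≠ PowerSeries.constantCoeff (u 1))) ∧
    (∀ β : ℂ, HasLeadingTerm (u j) β μ →
      β ^ 2 = PowerSeries.constantCoeff (u 1) - PowerSeries.constantCoeff (u (j + 1)) ∧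
      (PowerSeries.constantCoeff (u 1) - PowerSeries.constantCoeff (u (j + 1)) = 1 →
        β = 1 ∨ β = -1) ∧
      (PowerSeries.constantCoeff (u 1) - PowerSeries.constantCoeff (u (j + 1)) = -1 →
        β = Complex.I ∨ β = -Complex.I)) :=
  order_one_characterization_general p μ hμ u hu j hj1 hjp
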